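/- For natural numbers r, l, u, d, define F(r, l, u, d) ∈ ℤ[x] by F(r, l, u, d) = Σ_{k∈ℤ} x^{|k|} · C(r+u, u+k) · C(l+d, d−k), where C(a,b) denotes the binomial coefficient, taken to be 0 unless 0 ≤ b ≤ a. Then F(r, l, u, d) is (x+1)-positive if and only if F(r, u, l, d) is (x+1)-positive. -/
import Mathlib


open Polynomial

/-- Binomial coefficient with integer arguments, equal to 0 unless `0 ≤ b ≤ a`. -/
def zch (a b : ℤ) : ℕ := if 0 ≤ b ∧ b ≤ a then a.toNat.choose b.toNat else 0

/-- `Fgen r l u d = Σ_{k ∈ ℤ} x^{|k|} C(r+u, u+k) C(l+d, d−k)`: by the signed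
peak-count enumeration theorem, this is the generating function counting shuffles of a
vertical path with `u` North and `d` South steps and a horizontal path with `r` East and
`l` West steps according to the absolute value of their signed peak-count.  (All nonzero
terms of the sum over `k ∈ ℤ` have `−u ≤ k ≤ r`.) -/
noncomputable def Fgen (r l u d : ℕ) : Polynomial ℤ :=
  ∑ k ∈ Finset.Icc (-(u : ℤ)) (r : ℤ),
    Polynomial.C ((zch ((r : ℤ) + u) ((u : ℤ) + k) * zch ((l : ℤ) + d) ((d : ℤ) - k) : ℕ) : ℤ)
      * Polynomial.X ^ k.natAbs

/-- A polynomial in `ℤ[x]` is `(x+1)`-positive if it is a linear combination of powers of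
`x+1` with non-negative integer coefficients. -/
def XAddOnePositive (p : Polynomial ℤ) : Prop :=
  ∃ (N : ℕ) (c : ℕ → ℕ), p = ∑ i ∈ Finset.range N, Polynomial.C ((c i : ℤ)) * (Polynomial.X + 1) ^ i

-- zch on natural casts
lemma zch_natCast (a b : ℕ) : zch (a : ℤ) (b : ℤ) = if b ≤ a then a.choose b else 0 := by
  simp [zch]

lemma zch_eq_zero_of_neg {a b : ℤ} (h : b < 0) : zch a b = 0 := by
  simp [zch]; omega

lemma zch_eq_zero_of_gt {a b : ℤ} (h : a < b) : zch a b = 0 := by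
  simp [zch]; omega

-- factorial identity, nonneg j case
lemma key_pos (r l u d j : ℕ) (hjr : j ≤ r) (hjd : j ≤ d) :
    (r+l).choose l * (u+d).choose d * ((r+u).choose (u+j) * (l+d).choose (d-j)) =
    (r+u).choose u * (l+d).choose d * ((r+l).choose (l+j) * (u+d).choose (d-j)) := by
  have h1 : l ≤ r + l := by omega
  have h2 : d ≤ u + d := by omega
  have h3 : u + j ≤ r + u := by omega
  have h4 : d - j ≤ l + d := by omega
  have h5 : u ≤ r + u := by omega
  have h6 : d ≤ l + d := by omega
  have h7 : l + j ≤ r + l := by omega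
  have h8 : d - j ≤ u + d := by omega
  have := Nat.cast_injective (R := ℚ)
  apply this
  push_cast
  rw [Nat.cast_choose ℚ h1, Nat.cast_choose ℚ h2, Nat.cast_choose ℚ h3,
      Nat.cast_choose ℚ h4, Nat.cast_choose ℚ h5, Nat.cast_choose ℚ h6,
      Nat.cast_choose ℚ h7, Nat.cast_choose ℚ h8]
  have e1 : r + l - l = r := by omega
  have e2 : u + d - d = u := by omega
  have e3 : r + u - (u + j) = r - j := by omega
  have e4 : l + d - (d - j) = l + j := by omega
  have e5 : r + u - u = r := by omega
  have e6 : l + d - d = l := by omega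
  have e7 : r + l - (l + j) = r - j := by omega
  have e8 : u + d - (d - j) = u + j := by omega
  rw [e1, e2, e3, e4, e5, e6, e7, e8]
  have ne : ∀ n : ℕ, ((n.factorial : ℚ)) ≠ 0 := fun n => by
    exact_mod_cast n.factorial_ne_zero
  field_simp

-- factorial identity, negative j case
lemma key_neg (r l u d j : ℕ) (hju : j ≤ u) (hjl : j ≤ l) :
    (r+l).choose l * (u+d).choose d * ((r+u).choose (u-j) * (l+d).choose (d+j)) =
    (r+u).choose u * (l+d).choose d * ((r+l).choose (l-j) * (u+d).choose (d+j)) := by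
  have h1 : l ≤ r + l := by omega
  have h2 : d ≤ u + d := by omega
  have h3 : u - j ≤ r + u := by omega
  have h4 : d + j ≤ l + d := by omega
  have h5 : u ≤ r + u := by omega
  have h6 : d ≤ l + d := by omega
  have h7 : l - j ≤ r + l := by omega
  have h8 : d + j ≤ u + d := by omega
  have := Nat.cast_injective (R := ℚ)
  apply this
  push_cast
  rw [Nat.cast_choose ℚ h1, Nat.cast_choose ℚ h2, Nat.cast_choose ℚ h3,
      Nat.cast_choose ℚ h4, Nat.cast_choose ℚ h5, Nat.cast_choose ℚ h6,
      Nat.cast_choose ℚ h7, Nat.cast_choose ℚ h8]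
  have e1 : r + l - l = r := by omega
  have e2 : u + d - d = u := by omega
  have e3 : r + u - (u - j) = r + j := by omega
  have e4 : l + d - (d + j) = l - j := by omega
  have e5 : r + u - u = r := by omega
  have e6 : l + d - d = l := by omega
  have e7 : r + l - (l - j) = r + j := by omega
  have e8 : u + d - (d + j) = u - j := by omega
  rw [e1, e2, e3, e4, e5, e6, e7, e8]
  field_simp

-- per-k identity
lemma termkey (r l u d : ℕ) (k : ℤ) :
    (r+l).choose l * (u+d).choose d * (zch ((r:ℤ)+u) ((u:ℤ)+k) * zch ((l:ℤ)+d) ((d:ℤ)-k)) =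
    (r+u).choose u * (l+d).choose d * (zch ((r:ℤ)+l) ((l:ℤ)+k) * zch ((u:ℤ)+d) ((d:ℤ)-k)) := by
  by_cases hkr : (r : ℤ) < k
  · rw [zch_eq_zero_of_gt (by push_cast; omega), zch_eq_zero_of_gt (a := (r:ℤ)+l) (by push_cast; omega)]
    simp
  by_cases hkd : (d : ℤ) < k
  · rw [zch_eq_zero_of_neg (b := (d:ℤ)-k) (by omega), zch_eq_zero_of_neg (b := (d:ℤ)-k) (by omega)]
    simp
  by_cases hku : k < -(u:ℤ)
  · rw [zch_eq_zero_of_neg (b := (u:ℤ)+k) (by omega), zch_eq_zero_of_gt (a := (u:ℤ)+d) (by push_cast; omega)]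
    simp
  by_cases hkl : k < -(l:ℤ)
  · rw [zch_eq_zero_of_gt (a := (l:ℤ)+d) (by push_cast; omega), zch_eq_zero_of_neg (b := (l:ℤ)+k) (by omega)]
    simp
  -- in range
  push_neg at hkr hkd hku hkl
  rcases le_or_gt 0 k with hk | hk
  · obtain ⟨j, rfl⟩ := Int.eq_ofNat_of_zero_le hk
    have hjr : j ≤ r := by exact_mod_cast hkr
    have hjd : j ≤ d := by exact_mod_cast hkd
    have c1 : (u:ℤ) + j = ((u+j : ℕ) : ℤ) := by push_cast; ring
    have c2 : (d:ℤ) - j = ((d-j : ℕ) : ℤ) := by push_cast [hjd]; ring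
    have c3 : (l:ℤ) + j = ((l+j : ℕ) : ℤ) := by push_cast; ring
    have c4 : (r:ℤ) + u = ((r+u : ℕ) : ℤ) := by push_cast; ring
    have c5 : (l:ℤ) + d = ((l+d : ℕ) : ℤ) := by push_cast; ring
    have c6 : (r:ℤ) + l = ((r+l : ℕ) : ℤ) := by push_cast; ring
    have c7 : (u:ℤ) + d = ((u+d : ℕ) : ℤ) := by push_cast; ring
    rw [c1, c2, c3, c4, c5, c6, c7, zch_natCast, zch_natCast, zch_natCast, zch_natCast]
    rw [if_pos (by omega), if_pos (by omega), if_pos (by omega), if_pos (by omega)]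
    exact key_pos r l u d j hjr hjd
  · obtain ⟨j, rfl⟩ : ∃ j : ℕ, k = -(j:ℤ) := ⟨k.natAbs, by omega⟩
    have hju : j ≤ u := by omega
    have hjl : j ≤ l := by omega
    have c1 : (u:ℤ) + -(j:ℤ) = ((u-j : ℕ) : ℤ) := by push_cast [hju]; ring
    have c2 : (d:ℤ) - -(j:ℤ) = ((d+j : ℕ) : ℤ) := by push_cast; ring
    have c3 : (l:ℤ) + -(j:ℤ) = ((l-j : ℕ) : ℤ) := by push_cast [hjl]; ring
    have c4 : (r:ℤ) + u = ((r+u : ℕ) : ℤ) := by push_cast; ring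
    have c5 : (l:ℤ) + d = ((l+d : ℕ) : ℤ) := by push_cast; ring
    have c6 : (r:ℤ) + l = ((r+l : ℕ) : ℤ) := by push_cast; ring
    have c7 : (u:ℤ) + d = ((u+d : ℕ) : ℤ) := by push_cast; ring
    rw [c1, c2, c3, c4, c5, c6, c7, zch_natCast, zch_natCast, zch_natCast, zch_natCast]
    rw [if_pos (by omega), if_pos (by omega), if_pos (by omega), if_pos (by omega)]
    exact key_neg r l u d j hju hjl

-- Fgen over extended range
lemma Fgen_ext (r l u d m : ℕ) (hm : u ≤ m) :
    Fgen r l u d = ∑ k ∈ Finset.Icc (-(m : ℤ)) (r : ℤ),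
      Polynomial.C ((zch ((r : ℤ) + u) ((u : ℤ) + k) * zch ((l : ℤ) + d) ((d : ℤ) - k) : ℕ) : ℤ)
        * Polynomial.X ^ k.natAbs := by
  unfold Fgen
  apply Finset.sum_subset
  · intro k hk
    simp only [Finset.mem_Icc] at *
    omega
  · intro k hk hk'
    simp only [Finset.mem_Icc] at hk hk'
    have : (u:ℤ) + k < 0 := by omega
    rw [zch_eq_zero_of_neg this]
    simp

-- scaled identity
lemma Fgen_scaled (r l u d : ℕ) :
    Polynomial.C (((r+l).choose l * (u+d).choose d : ℕ) : ℤ) * Fgen r l u d =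
    Polynomial.C (((r+u).choose u * (l+d).choose d : ℕ) : ℤ) * Fgen r u l d := by
  rw [Fgen_ext r l u d (u+l) (by omega), Fgen_ext r u l d (u+l) (by omega),
    Finset.mul_sum, Finset.mul_sum]
  apply Finset.sum_congr rfl
  intro k _
  rw [← mul_assoc, ← mul_assoc, ← Polynomial.C_mul, ← Polynomial.C_mul]
  have := termkey r l u d k
  congr 2
  push_cast
  exact_mod_cast congrArg (fun n : ℕ => (n : ℤ)) this

-- positivity criterion
lemma xAddOnePositive_iff (p : Polynomial ℤ) :
    XAddOnePositive p ↔ ∀ i, 0 ≤ (p.comp (Polynomial.X - 1)).coeff i := by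
  have comp1 : (Polynomial.X + 1 : Polynomial ℤ).comp (Polynomial.X - 1) = Polynomial.X := by
    simp [Polynomial.add_comp]
  constructor
  · rintro ⟨N, c, rfl⟩
    intro i
    rw [Polynomial.sum_comp]
    simp only [Polynomial.mul_comp, Polynomial.C_comp, Polynomial.pow_comp, comp1]
    rw [Polynomial.finset_sum_coeff]
    simp only [Polynomial.coeff_C_mul, Polynomial.coeff_X_pow, mul_ite, mul_one, mul_zero]
    apply Finset.sum_nonneg
    intro j _
    split <;> simp
  · intro h
    have comp2 : (p.comp (Polynomial.X - 1)).comp (Polynomial.X + 1) = p := by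
      rw [Polynomial.comp_assoc]
      simp [Polynomial.sub_comp]
    set q := p.comp (Polynomial.X - 1) with hq
    refine ⟨q.natDegree + 1, fun i => (q.coeff i).toNat, ?_⟩
    conv_lhs => rw [← comp2]
    conv_lhs => rw [q.as_sum_range' (q.natDegree + 1) (Nat.lt_succ_self _)]
    rw [Polynomial.sum_comp]
    apply Finset.sum_congr rfl
    intro i _
    rw [Int.toNat_of_nonneg (h i)]
    rw [Polynomial.C_mul_X_pow_eq_monomial.symm, Polynomial.mul_comp, Polynomial.C_comp,
      Polynomial.pow_comp, Polynomial.X_comp]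

/-- **Proposition ((x+1)-positivity of `F` is symmetric in `l` and `u`).**
`F(r, l, u, d)` is `(x+1)`-positive if and only if `F(r, u, l, d)` is `(x+1)`-positive. -/
theorem Fgen_xAddOnePositive_swap (r l u d : ℕ) :
    XAddOnePositive (Fgen r l u d) ↔ XAddOnePositive (Fgen r u l d) := by
  have ha : (0:ℕ) < (r+l).choose l * (u+d).choose d :=
    Nat.mul_pos (Nat.choose_pos (by omega)) (Nat.choose_pos (by omega))
  have hb : (0:ℕ) < (r+u).choose u * (l+d).choose d :=
    Nat.mul_pos (Nat.choose_pos (by omega)) (Nat.choose_pos (by omega))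
  have scale : ∀ (m : ℕ), 0 < m → ∀ p : Polynomial ℤ,
      (XAddOnePositive (Polynomial.C ((m:ℕ):ℤ) * p) ↔ XAddOnePositive p) := by
    intro m hm p
    rw [xAddOnePositive_iff, xAddOnePositive_iff]
    have : (Polynomial.C ((m:ℕ):ℤ) * p).comp (Polynomial.X - 1)
        = Polynomial.C ((m:ℕ):ℤ) * p.comp (Polynomial.X - 1) := by
      simp [Polynomial.mul_comp]
    rw [this]
    constructor
    · intro h i
      have := h i
      rw [Polynomial.coeff_C_mul] at this
      have hm' : (0:ℤ) < (m:ℤ) := by exact_mod_cast hm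
      exact nonneg_of_mul_nonneg_right this hm'
    · intro h i
      rw [Polynomial.coeff_C_mul]
      exact mul_nonneg (by positivity) (h i)
  rw [← scale _ ha (Fgen r l u d), ← scale _ hb (Fgen r u l d), Fgen_scaled]
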